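/- Let R(s) = A₀ + sA₁ + s²A₂ + Σ_{j=1}^m A_{−j} r_j(s) with r_j(s) = α_j + a_jᵀΦ(s), where Φ(s) = −(C₀+sC₁)⁻¹(c₀+sc₁). Define the block pencil 𝐋(s) with first block row [Ã₀+sA₁, sA₂, Σ_j a_jᵀ⊗A_{−j}], second block row [sI, −I, 0], third block row [(c₀+sc₁)⊗I, 0, (C₀+sC₁)⊗I], where Ã₀ = A₀ + Σ_j α_j A_{−j}. If R(s)x̂ = b̂, then 𝐋(s)·((1, s, Φ(s))ᵀ ⊗ x̂) = e₁ ⊗ b̂. -/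

import Mathlib

open Matrix

/-- If `R(s)x̂ = b̂` with `R(s) = A₀+sA₁+s²A₂+Σ_j A_{−j}(α_j + a_jᵀΦ(s))`, then the
block linearization pencil `𝐋(s)` satisfies `𝐋(s)·((1,s,Φ(s))ᵀ ⊗ x̂) = e₁ ⊗ b̂`. -/
theorem linearization_of_rational_matrix {n d m : ℕ} (s : ℂ)
    (A0 A1 A2 : Matrix (Fin n) (Fin n) ℂ) (Am : Fin m → Matrix (Fin n) (Fin n) ℂ)
    (α : Fin m → ℂ) (a : Fin m → Fin d → ℂ)
    (c0 c1 : Fin d → ℂ) (C0 C1 : Matrix (Fin d) (Fin d) ℂ)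
    (hC : IsUnit (C0 + s • C1)) (x b : Fin n → ℂ) :
    let Φ : Fin d → ℂ := -((C0 + s • C1)⁻¹.mulVec (c0 + s • c1))
    let R : Matrix (Fin n) (Fin n) ℂ :=
      A0 + s • A1 + s ^ 2 • A2 + ∑ j, (α j + a j ⬝ᵥ Φ) • Am j
    let At0 : Matrix (Fin n) (Fin n) ℂ := A0 + ∑ j, α j • Am j
    let L : Matrix (Fin n ⊕ (Fin n ⊕ Fin d × Fin n))
        (Fin n ⊕ (Fin n ⊕ Fin d × Fin n)) ℂ :=
      Matrix.of fun r c =>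
        match r, c with
        | Sum.inl i, Sum.inl i' => (At0 + s • A1) i i'
        | Sum.inl i, Sum.inr (Sum.inl i') => (s • A2) i i'
        | Sum.inl i, Sum.inr (Sum.inr ki') => ∑ j, a j ki'.1 * Am j i ki'.2
        | Sum.inr (Sum.inl i), Sum.inl i' => s * (if i = i' then 1 else 0)
        | Sum.inr (Sum.inl i), Sum.inr (Sum.inl i') => -(if i = i' then 1 else 0)
        | Sum.inr (Sum.inl _), Sum.inr (Sum.inr _) => 0
        | Sum.inr (Sum.inr ki), Sum.inl i' =>
            (c0 ki.1 + s * c1 ki.1) * (if ki.2 = i' then 1 else 0)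
        | Sum.inr (Sum.inr _), Sum.inr (Sum.inl _) => 0
        | Sum.inr (Sum.inr ki), Sum.inr (Sum.inr li') =>
            (C0 ki.1 li'.1 + s * C1 ki.1 li'.1) * (if ki.2 = li'.2 then 1 else 0)
    R.mulVec x = b →
    L.mulVec (Sum.elim x (Sum.elim (fun i => s * x i)
        (fun ki => Φ ki.1 * x ki.2))) = Sum.elim b 0 := by

  intro Φ R At0 L h
  have hdet : IsUnit (C0 + s • C1).det := (Matrix.isUnit_iff_isUnit_det _).mp hC
  have hΦ : (C0 + s • C1).mulVec Φ = -(c0 + s • c1) := by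
    show (C0 + s • C1).mulVec (-((C0 + s • C1)⁻¹.mulVec (c0 + s • c1))) = _
    rw [Matrix.mulVec_neg, Matrix.mulVec_mulVec, Matrix.mul_nonsing_inv _ hdet,
      Matrix.one_mulVec]
  funext r
  rcases r with i | i | ⟨k, i⟩
  · have hRi := congrFun h i
    simp only [R, Matrix.mulVec, dotProduct, Matrix.add_apply, Matrix.smul_apply,
      Matrix.sum_apply, smul_eq_mul] at hRi
    simp only [L, At0, Matrix.mulVec, dotProduct, Fintype.sum_sum_type,
      Fintype.sum_prod_type, Matrix.of_apply, Sum.elim_inl, Sum.elim_inr,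
      Matrix.add_apply, Matrix.smul_apply, Matrix.sum_apply, smul_eq_mul]
    rw [Finset.sum_comm, ← Finset.sum_add_distrib, ← Finset.sum_add_distrib, ← hRi]
    refine Finset.sum_congr rfl fun i' _ => ?_
    simp only [Finset.sum_mul, Finset.mul_sum, add_mul, mul_add, dotProduct]
    rw [Finset.sum_add_distrib, Finset.sum_comm]
    ring_nf
    congr 1
    · exact Finset.sum_congr rfl fun j _ => Finset.sum_congr rfl fun k _ => by ring
  · simp only [L, Matrix.mulVec, dotProduct, Fintype.sum_sum_type,
      Fintype.sum_prod_type, Matrix.of_apply, Sum.elim_inl, Sum.elim_inr,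
      mul_ite, mul_one, mul_zero, ite_mul, zero_mul, neg_mul, one_mul,
      Finset.sum_ite_eq, Finset.mem_univ, if_true, Finset.sum_neg_distrib,
      Finset.sum_const_zero, add_zero, Sum.elim_inr]
    ring_nf
    simp
  · have hΦk := congrFun hΦ k
    simp only [Matrix.mulVec, dotProduct, Matrix.add_apply, Matrix.smul_apply,
      smul_eq_mul, Pi.neg_apply, Pi.add_apply, Pi.smul_apply] at hΦk
    simp only [L, Matrix.mulVec, dotProduct, Fintype.sum_sum_type,
      Fintype.sum_prod_type, Matrix.of_apply, Sum.elim_inl, Sum.elim_inr,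
      mul_ite, mul_one, mul_zero, ite_mul, zero_mul,
      Finset.sum_ite_eq, Finset.mem_univ, if_true, Finset.sum_const_zero, add_zero]
    simp only [← mul_assoc, ← Finset.sum_mul, hΦk]
    ring_nf
    simp
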